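/- Let M ≥ 2 and let A be the inverse of the M×M Vandermonde matrix V with V_{j,n} = j^(n-1). Then the second row of A satisfies A_{2,n} = (-1)^n * C(M,n) * ( Σ_{q=1}^{n-1} 1/q + Σ_{q=n+1}^{M} 1/q ) for n = 1,…,M. -/

import Mathlib

/-!
Column `l` of the inverse of the Vandermonde matrix on distinct nodes `v₁, …, v_M` is the
coefficient vector of the Lagrange basis polynomial `L_l`, so `A_{2,n}` is the linear coefficient
of `L_n`. For `p = c ∏ (X - a_j)` with all `a_j ≠ 0`, the logarithmic derivative at `0` gives
`p'(0) = -p(0) ∑ 1/a_j`. For the nodes `1, …, M` the sum is the harmonic sum with the term `1/n`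
missing, and `L_n(0) = ∏_{j ≠ n} j/(j - n) = (-1)^(n-1) C(M,n)`: the factors with `j < n` give
`(-1)^(n-1)`, those with `j > n` give `C(M,n)`.
-/

open Finset Polynomial

theorem Polynomial.coeff_one_prod_X_sub_C {R ι : Type*} [CommRing R] [DecidableEq ι]
    (s : Finset ι) (a : ι → R) :
    (∏ j ∈ s, (X - C (a j))).coeff 1 = ∑ i ∈ s, ∏ j ∈ s.erase i, -a j := by
  have h := coeff_derivative (∏ j ∈ s, (X - C (a j))) 0
  rw [zero_add, Nat.cast_zero, zero_add, mul_one] at h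
  rw [← h, coeff_zero_eq_eval_zero, derivative_prod_finset, eval_finsetSum]
  simp [eval_prod]

theorem Polynomial.coeff_one_prod_X_sub_C_of_ne_zero {F ι : Type*} [Field F] [DecidableEq ι]
    {s : Finset ι} {a : ι → F} (ha : ∀ j ∈ s, a j ≠ 0) :
    (∏ j ∈ s, (X - C (a j))).coeff 1 =
      -(∏ j ∈ s, (X - C (a j))).coeff 0 * ∑ j ∈ s, (a j)⁻¹ := by
  rw [coeff_one_prod_X_sub_C, coeff_zero_eq_eval_zero, eval_prod, mul_sum]
  refine sum_congr rfl fun i hi => ?_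
  rw [← mul_prod_erase s _ hi]
  simp only [eval_sub, eval_X, eval_C, zero_sub]
  field_simp [ha i hi]

namespace Lagrange

variable {F ι : Type*} [Field F] [DecidableEq ι] {s : Finset ι} {v : ι → F} {i : ι}

theorem basis_eq_C_mul_prod_X_sub_C :
    Lagrange.basis s v i = C (nodalWeight s v i) * ∏ j ∈ s.erase i, (X - C (v j)) := by
  simp only [Lagrange.basis, basisDivisor, nodalWeight, prod_mul_distrib, map_prod]

theorem coeff_one_basis (hv : ∀ j ∈ s.erase i, v j ≠ 0) :
    (Lagrange.basis s v i).coeff 1 =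
      -(Lagrange.basis s v i).eval 0 * ∑ j ∈ s.erase i, (v j)⁻¹ := by
  rw [basis_eq_C_mul_prod_X_sub_C, coeff_C_mul, coeff_one_prod_X_sub_C_of_ne_zero hv,
    eval_mul, eval_C, ← coeff_zero_eq_eval_zero]
  ring

theorem eval_zero_basis :
    (Lagrange.basis s v i).eval 0 = ∏ j ∈ s.erase i, v j / (v j - v i) := by
  rw [Lagrange.basis, eval_prod]
  refine prod_congr rfl fun j _ => ?_
  simp only [basisDivisor, eval_mul, eval_C, eval_sub, eval_X, zero_sub]
  rw [← neg_sub, inv_neg]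
  ring

end Lagrange

namespace Matrix

variable {F : Type*} [Field F] {n : ℕ} {v : Fin n → F}

theorem vandermonde_mul_coeff_basis (hv : Function.Injective v) :
    vandermonde v * of (fun (i l : Fin n) => (Lagrange.basis univ v l).coeff i) = 1 := by
  ext j l
  have hdeg : (Lagrange.basis univ v l).natDegree < n := by
    rw [Lagrange.natDegree_basis hv.injOn (mem_univ l), card_univ, Fintype.card_fin]
    exact Nat.sub_lt_self one_pos (Fin.pos l)
  have heval : (vandermonde v * of (fun (i l : Fin n) => (Lagrange.basis univ v l).coeff i)) j l
      = (Lagrange.basis univ v l).eval (v j) := by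
    rw [mul_apply, eval_eq_sum_range' hdeg, ← Fin.sum_univ_eq_sum_range]
    simp [mul_comm]
  rw [heval]
  rcases eq_or_ne j l with rfl | hne
  · rw [Lagrange.eval_basis_self hv.injOn (mem_univ j), one_apply_eq]
  · rw [Lagrange.eval_basis_of_ne hne.symm (mem_univ j), one_apply_ne hne]

theorem inv_vandermonde_apply (hv : Function.Injective v) (i l : Fin n) :
    (vandermonde v)⁻¹ i l = (Lagrange.basis univ v l).coeff i := by
  rw [inv_eq_right_inv (vandermonde_mul_coeff_basis hv), of_apply]

end Matrix

theorem Nat.Icc_one_erase_eq_union {M n : ℕ} (h : n ≤ M) :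
    (Icc 1 M).erase n = Icc 1 (n - 1) ∪ Icc (n + 1) M := by
  ext q; simp only [mem_erase, mem_Icc, mem_union]; omega

theorem Nat.disjoint_Icc_one_pred_Icc_succ (M n : ℕ) :
    Disjoint (Icc 1 (n - 1)) (Icc (n + 1) M) := by
  simp only [disjoint_left, mem_Icc]; omega

theorem Fin.map_erase_univ_succ {M : ℕ} (k : Fin M) :
    (univ.erase k).map (Fin.valEmbedding.trans (addRightEmbedding 1)) =
      (Icc 1 M).erase (k + 1) := by
  rw [map_erase, ← map_map, Fin.map_valEmbedding_univ]
  ext q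
  simp only [Function.Embedding.trans_apply, valEmbedding_apply, addRightEmbedding_apply,
    mem_erase, ne_eq, mem_map, mem_Iio, mem_Icc, and_congr_right_iff]
  exact fun _ => ⟨by rintro ⟨a, ha, rfl⟩; omega, fun h => ⟨q - 1, by omega, by omega⟩⟩

theorem prod_Icc_one_natCast_sub_reflect {R : Type*} [CommRing R] (n : ℕ) :
    ∏ j ∈ Icc 1 (n - 1), ((n : R) - j) = ∏ j ∈ Icc 1 (n - 1), (j : R) := by
  refine prod_nbij' (n - ·) (n - ·) ?_ ?_ ?_ ?_ ?_ <;> simp only [mem_Icc]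
  all_goals intros; try omega
  rw [Nat.cast_sub (by omega)]

section CharZero

variable {K : Type*} [Field K] [CharZero K]

theorem prod_Icc_one_div_sub_eq_neg_one_pow (n : ℕ) :
    ∏ j ∈ Icc 1 (n - 1), (j : K) / (j - n) = (-1) ^ (n - 1) := by
  have hflip : ∀ j ∈ Icc 1 (n - 1), (j : K) / (j - n) = -1 * ((j : K) / (n - j)) :=
    fun j _ => by rw [← neg_sub, div_neg]; ring
  have hne : ∀ j ∈ Icc 1 (n - 1), (j : K) ≠ 0 := fun j hj => by
    simp only [mem_Icc] at hj; exact_mod_cast (by omega : j ≠ 0)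
  rw [prod_congr rfl hflip, prod_mul_distrib, prod_const, Nat.card_Icc, prod_div_distrib,
    prod_Icc_one_natCast_sub_reflect, div_self (prod_ne_zero_iff.mpr hne), Nat.add_sub_cancel,
    mul_one]

theorem prod_Icc_succ_div_sub_eq_choose {n M : ℕ} (h : n ≤ M) :
    ∏ j ∈ Icc (n + 1) M, (j : K) / (j - n) = M.choose n := by
  induction M, h using Nat.le_induction with
  | base => simp
  | succ M hnM ih =>
    rw [prod_Icc_succ_top (by omega), ih]
    have hchoose : ((M.choose n * (M + 1) : ℕ) : K) = ((M + 1).choose n * (M + 1 - n) : ℕ) :=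
      congrArg _ (Nat.choose_mul_succ_eq M n)
    have hsub : (M + 1 : K) - n ≠ 0 := by
      rw [sub_ne_zero]; exact_mod_cast (by omega : M + 1 ≠ n)
    push_cast [Nat.cast_sub (by omega : n ≤ M + 1)] at hchoose ⊢
    field_simp
    linear_combination hchoose

theorem prod_Icc_one_erase_div_sub {n M : ℕ} (h : n ≤ M) :
    ∏ j ∈ (Icc 1 M).erase n, (j : K) / (j - n) = (-1) ^ (n - 1) * M.choose n := by
  rw [Nat.Icc_one_erase_eq_union h, prod_union (Nat.disjoint_Icc_one_pred_Icc_succ M n),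
    prod_Icc_one_div_sub_eq_neg_one_pow, prod_Icc_succ_div_sub_eq_choose h]

end CharZero

/-- The second row of the inverse of the Vandermonde matrix `V_{j,n} = j^(n-1)`,
`j, n ∈ {1,…,M}` (indexed here by `Fin M`): with `n = k+1`,
`A_{2,n} = (-1)^n * C(M,n) * (Σ_{q=1}^{n-1} 1/q + Σ_{q=n+1}^{M} 1/q)`. -/
theorem inverse_vandermonde_second_row (M : ℕ) (hM : 2 ≤ M) (k : Fin M) :
    (Matrix.of fun j n : Fin M => ((j : ℚ) + 1) ^ (n : ℕ))⁻¹
        ⟨1, by omega⟩ k =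
      (-1 : ℚ) ^ ((k : ℕ) + 1) * (M.choose ((k : ℕ) + 1)) *
        ((∑ q ∈ Finset.Icc 1 (k : ℕ), (1 : ℚ) / q) +
         (∑ q ∈ Finset.Icc ((k : ℕ) + 2) M, (1 : ℚ) / q)) := by
  set v : Fin M → ℚ := fun j => (j : ℚ) + 1
  have hv : Function.Injective v := fun a b h => Fin.ext (by simpa [v] using h)
  have hv0 : ∀ j ∈ univ.erase k, v j ≠ 0 := fun j _ => by positivity
  have hprod : ∏ j ∈ univ.erase k, v j / (v j - v k) = (-1) ^ (k : ℕ) * M.choose (k + 1) := by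
    have h := prod_Icc_one_erase_div_sub (K := ℚ) (n := k + 1) k.isLt
    rw [← Fin.map_erase_univ_succ, prod_map] at h
    simpa [v] using h
  have hsum : ∑ j ∈ univ.erase k, (v j)⁻¹ =
      ∑ q ∈ Icc 1 (k : ℕ), (1 : ℚ) / q + ∑ q ∈ Icc ((k : ℕ) + 2) M, (1 : ℚ) / q := by
    have h := sum_union (Nat.disjoint_Icc_one_pred_Icc_succ M (k + 1))
      (f := fun q : ℕ => (1 : ℚ) / q)
    rw [← Nat.Icc_one_erase_eq_union k.isLt, ← Fin.map_erase_univ_succ, sum_map] at h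
    simpa [v] using h
  change (Matrix.vandermonde v)⁻¹ _ _ = _
  rw [Matrix.inv_vandermonde_apply hv, Fin.val_mk, Lagrange.coeff_one_basis hv0,
    Lagrange.eval_zero_basis, hprod, hsum]
  ring
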